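/- arXiv:1810.02750 — 3 statements merged into one kernel-verified Lean document; each statement's English description precedes it below -/
import Mathlib

section
/- Let (Ω, ℱ, P) be a probability space with a filtration (ℱ_m)_{0≤m≤N} indexed by {0,1,…,N}, and let (ξ_m)_{0≤m≤N} and (Y_m)_{0≤m≤N} be real-valued processes adapted to this filtration with ξ₀ = Y₀ = 0. Suppose (ξ_m) is almost surely nondecreasing in m with ξ_N ≤ 1 almost surely, and that for some δ ∈ (0,1) and integer K ≥ 1 the following hold almost surely for every m ∈ {0,1,…,N−1}: |Y_{m+1} − Y_m| ≤ ξ_{m+1} − ξ_m ≤ 1/K², and |E[Y_{m+1} − Y_m | ℱ_m]| ≤ δ·E[ξ_{m+1} − ξ_m | ℱ_m]. Then E[ max_{0≤m≤N} |Y_m| ] ≤ 2/K + δ. -/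
/-
Stop `Y` at time `N` and split it by the Doob decomposition into a martingale `M` and a
predictable part `A`, with `A m = ∑_{k<m} E[Y (k+1) - Y k | ℱ k]`. By the drift hypothesis
`|A m| ≤ δ ∑_{k<N} E[ξ (k+1) - ξ k | ℱ k]`, whose expectation is `E[ξ N] ≤ 1`.
The increments of `M` are orthogonal in `L²`, and each is the increment of `Y` minus its
conditional mean, so `E[M N ^ 2] ≤ ∑_{k<N} E[(Y (k+1) - Y k) ^ 2] ≤ K⁻² E[ξ N] ≤ K⁻²`.
Doob's maximal inequality for the submartingale `M ^ 2` bounds `P(max_{k≤N} |M k| ≥ t)` by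
`E[M N ^ 2] / t ^ 2`; integrating this tail bound for `t > 1/K` (layer cake) gives
`E[max_{k≤N} |M k|] ≤ 1/K + K E[M N ^ 2] ≤ 2/K`.
-/

open MeasureTheory Filter Finset
open scoped ENNReal ProbabilityTheory

lemma abs_sub_le_sub_of_abs_sub_succ_le {x y : ℕ → ℝ} {N : ℕ}
    (h : ∀ m < N, |y (m + 1) - y m| ≤ x (m + 1) - x m) {i j : ℕ} (hij : i ≤ j) (hj : j ≤ N) :
    |y j - y i| ≤ x j - x i := by
  induction j, hij using Nat.le_induction with
  | base => simp
  | succ j hij ih =>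
    calc |y (j + 1) - y i| ≤ |y (j + 1) - y j| + |y j - y i| := abs_sub_le _ _ _
      _ ≤ (x (j + 1) - x j) + (x j - x i) := add_le_add (h j hj) (ih (by omega))
      _ = x (j + 1) - x i := by ring

lemma abs_le_and_le_one_of_abs_sub_succ_le {x y : ℕ → ℝ} {N : ℕ}
    (h : ∀ m < N, |y (m + 1) - y m| ≤ x (m + 1) - x m) (hx0 : x 0 = 0) (hy0 : y 0 = 0)
    (hxN : x N ≤ 1) {m : ℕ} (hm : m ≤ N) : |y m| ≤ x m ∧ x m ≤ 1 := by
  have h0m := abs_sub_le_sub_of_abs_sub_succ_le h m.zero_le hm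
  have hmN := abs_sub_le_sub_of_abs_sub_succ_le h hm le_rfl
  rw [hx0, hy0, sub_zero, sub_zero] at h0m
  exact ⟨h0m, by linarith [abs_nonneg (y N - y m)]⟩

namespace MeasureTheory

variable {Ω : Type*} {m0 : MeasurableSpace Ω} {μ : Measure Ω}

lemma integrable_finset_sup' {ι : Type*} {s : Finset ι} (hs : s.Nonempty) {f : ι → Ω → ℝ}
    (hf : ∀ i ∈ s, Integrable (f i) μ) : Integrable (fun ω => s.sup' hs fun i => f i ω) μ := by
  convert Finset.sup'_induction (p := fun g => Integrable g μ) hs f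
    (fun _ hg _ hh => hg.sup hh) hf using 1
  ext ω
  exact (Finset.sup'_apply hs f ω).symm

lemma integral_sq_sub_condExp_le [IsFiniteMeasure μ] {m : MeasurableSpace Ω} (hm : m ≤ m0)
    {X : Ω → ℝ} (hX : MemLp X 2 μ) :
    ∫ ω, (X ω - μ[X|m] ω) ^ 2 ∂μ ≤ ∫ ω, X ω ^ 2 ∂μ :=
  calc ∫ ω, (X ω - μ[X|m] ω) ^ 2 ∂μ = ∫ ω, Var[X; μ | m] ω ∂μ := (integral_condExp hm).symm
    _ ≤ ∫ ω, μ[X ^ 2|m] ω ∂μ :=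
      integral_mono_ae ProbabilityTheory.integrable_condVar integrable_condExp
        (ProbabilityTheory.condVar_ae_le_condExp_sq hm hX)
    _ = ∫ ω, X ω ^ 2 ∂μ := integral_condExp hm

lemma integral_le_mul_add_div_of_measureReal_le [IsFiniteMeasure μ] {G : Ω → ℝ}
    (hG : Integrable G μ) (hG0 : 0 ≤ᵐ[μ] G) {a s : ℝ} (ha : 0 < a)
    (htail : ∀ t, a < t → μ.real {ω | t ≤ G ω} ≤ s / t ^ 2) :
    ∫ ω, G ω ∂μ ≤ a * μ.real Set.univ + s / a := by
  set h : ℝ → ℝ := fun t => μ.real {ω | t ≤ G ω}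
  have h_meas : Measurable h := Antitone.measurable fun t u htu =>
    measureReal_mono fun ω hω => htu.trans hω
  have h_le : ∀ t, h t ≤ μ.real Set.univ := fun t => measureReal_mono (Set.subset_univ _)
  have hpow : IntegrableOn (fun t : ℝ => s * t ^ (-2 : ℝ)) (Set.Ioi a) :=
    (integrableOn_Ioi_rpow_of_lt (by norm_num) ha).const_mul s
  have htail' : ∀ t ∈ Set.Ioi a, h t ≤ s * t ^ (-2 : ℝ) := fun t ht => by
    have ht0 : 0 < t := ha.trans ht
    rw [Real.rpow_neg ht0.le, Real.rpow_two, ← div_eq_mul_inv]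
    exact htail t ht
  have hint_Ioc : IntegrableOn h (Set.Ioc 0 a) :=
    IntegrableOn.of_bound measure_Ioc_lt_top h_meas.aestronglyMeasurable _
      (Eventually.of_forall fun t => by
        rw [Real.norm_eq_abs, abs_of_nonneg measureReal_nonneg]; exact h_le t)
  have hint_Ioi : IntegrableOn h (Set.Ioi a) :=
    hpow.mono' h_meas.aestronglyMeasurable <| (ae_restrict_iff' measurableSet_Ioi).2 <|
      Eventually.of_forall fun t ht => by
        rw [Real.norm_eq_abs, abs_of_nonneg measureReal_nonneg]; exact htail' t ht
  have hIoc : ∫ t in Set.Ioc 0 a, h t ≤ a * μ.real Set.univ := by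
    calc ∫ t in Set.Ioc 0 a, h t ≤ ∫ _ in Set.Ioc 0 a, μ.real Set.univ :=
          setIntegral_mono_on hint_Ioc (integrableOn_const measure_Ioc_lt_top.ne)
            measurableSet_Ioc fun t _ => h_le t
      _ = a * μ.real Set.univ := by simp [ha.le]
  have hIoi : ∫ t in Set.Ioi a, h t ≤ s / a := by
    calc ∫ t in Set.Ioi a, h t ≤ ∫ t in Set.Ioi a, s * t ^ (-2 : ℝ) :=
          setIntegral_mono_on hint_Ioi hpow measurableSet_Ioi htail'
      _ = s / a := by
        rw [integral_const_mul, integral_Ioi_rpow_of_lt (by norm_num) ha]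
        norm_num [Real.rpow_neg_one, div_eq_mul_inv]
  rw [hG.integral_eq_integral_meas_le hG0, ← Set.Ioc_union_Ioi_eq_Ioi ha.le,
    setIntegral_union (Set.Ioc_disjoint_Ioi le_rfl) measurableSet_Ioi hint_Ioc hint_Ioi]
  exact add_le_add hIoc hIoi

section Martingale

variable {ι : Type*} [Preorder ι] {ℱ : Filtration ι m0}

lemma Martingale.submartingale_sq [IsFiniteMeasure μ] {M : ι → Ω → ℝ} (hM : Martingale M ℱ μ)
    (hM2 : ∀ i, MemLp (M i) 2 μ) : Submartingale (fun i ω => M i ω ^ 2) ℱ μ := by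
  refine ⟨fun i => (hM.stronglyAdapted i).pow 2, fun i j hij => ?_, fun i => (hM2 i).integrable_sq⟩
  have hJensen := (even_two.convexOn_pow (𝕜 := ℝ)).map_condExp_le_univ (ℱ.le i)
    (continuous_pow 2).lowerSemicontinuous ((hM2 j).integrable one_le_two) (hM2 j).integrable_sq
  filter_upwards [hJensen, hM.condExp_ae_eq hij] with ω hω hMω
  calc M i ω ^ 2 = μ[M j|ℱ i] ω ^ 2 := by rw [hMω]
    _ ≤ _ := hω

end Martingale

variable {ℱ : Filtration ℕ m0}

lemma Submartingale.mul_measureReal_le_sup'_le [IsFiniteMeasure μ] {f : ℕ → Ω → ℝ}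
    (hf : Submartingale f ℱ μ) (hf0 : 0 ≤ f) {ε : ℝ} (hε : 0 ≤ ε) (n : ℕ) :
    ε * μ.real {ω | ε ≤ (range (n + 1)).sup' nonempty_range_add_one fun k => f k ω} ≤
      ∫ ω, f n ω ∂μ := by
  set S := {ω | ε ≤ (range (n + 1)).sup' nonempty_range_add_one fun k => f k ω}
  have hmax := maximal_ineq hf hf0 (ε := ε.toNNReal) n
  rw [Real.coe_toNNReal _ hε] at hmax
  calc ε * μ.real S = (ε.toNNReal * μ S).toReal := by
        rw [ENNReal.toReal_mul, ENNReal.coe_toReal, Real.coe_toNNReal _ hε, measureReal_def]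
    _ ≤ ∫ ω in S, f n ω ∂μ :=
      ENNReal.toReal_le_of_le_ofReal (setIntegral_nonneg_of_ae (ae_of_all _ (hf0 n))) hmax
    _ ≤ ∫ ω, f n ω ∂μ := setIntegral_le_integral (hf.integrable n) (ae_of_all _ (hf0 n))

lemma Martingale.measureReal_le_sup'_abs_le [IsFiniteMeasure μ] {M : ℕ → Ω → ℝ}
    (hM : Martingale M ℱ μ) (hM2 : ∀ n, MemLp (M n) 2 μ) {t : ℝ} (ht : 0 < t) (n : ℕ) :
    μ.real {ω | t ≤ (range (n + 1)).sup' nonempty_range_add_one fun k => |M k ω|} ≤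
      (∫ ω, M n ω ^ 2 ∂μ) / t ^ 2 := by
  have hset : {ω | t ≤ (range (n + 1)).sup' nonempty_range_add_one fun k => |M k ω|} =
      {ω | t ^ 2 ≤ (range (n + 1)).sup' nonempty_range_add_one fun k => M k ω ^ 2} := by
    ext ω
    simp only [Set.mem_ofPred_eq, Finset.le_sup'_iff, sq_le_sq, abs_of_pos ht]
  rw [hset, le_div_iff₀ (by positivity), mul_comm]
  exact (hM.submartingale_sq hM2).mul_measureReal_le_sup'_le (fun n ω => sq_nonneg _)
    (sq_nonneg t) n

lemma Martingale.integral_sup'_abs_le [IsFiniteMeasure μ] {M : ℕ → Ω → ℝ}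
    (hM : Martingale M ℱ μ) (hM2 : ∀ n, MemLp (M n) 2 μ) {a : ℝ} (ha : 0 < a) (n : ℕ) :
    ∫ ω, (range (n + 1)).sup' nonempty_range_add_one (fun k => |M k ω|) ∂μ ≤
      a * μ.real Set.univ + (∫ ω, M n ω ^ 2 ∂μ) / a :=
  integral_le_mul_add_div_of_measureReal_le
    (integrable_finset_sup' _ fun k _ => ((hM2 k).integrable one_le_two).abs)
    (ae_of_all _ fun ω => (abs_nonneg (M 0 ω)).trans
      (le_sup' (fun k => |M k ω|) (mem_range_succ_iff.2 n.zero_le))) ha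
    fun _ ht => hM.measureReal_le_sup'_abs_le hM2 (ha.trans ht) n

lemma Martingale.integral_sq_add_one [IsFiniteMeasure μ] {M : ℕ → Ω → ℝ}
    (hM : Martingale M ℱ μ) (hM2 : ∀ n, MemLp (M n) 2 μ) (n : ℕ) :
    ∫ ω, M (n + 1) ω ^ 2 ∂μ =
      ∫ ω, M n ω ^ 2 ∂μ + ∫ ω, (M (n + 1) ω - M n ω) ^ 2 ∂μ := by
  set D := M (n + 1) - M n
  have hD : MemLp D 2 μ := (hM2 (n + 1)).sub (hM2 n)
  have hMD : Integrable (M n * D) μ := (hM2 n).integrable_mul hD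
  have hD_cond : μ[D|ℱ n] =ᵐ[μ] 0 := by
    filter_upwards [condExp_sub ((hM2 (n + 1)).integrable one_le_two)
      ((hM2 n).integrable one_le_two) (ℱ n), hM.condExp_ae_eq n.le_succ,
      hM.condExp_ae_eq (le_refl n)] with ω h h1 h0
    simp [D, h, h1, h0]
  have hcross : ∫ ω, M n ω * D ω ∂μ = 0 := by
    calc ∫ ω, M n ω * D ω ∂μ = ∫ ω, μ[M n * D|ℱ n] ω ∂μ := (integral_condExp (ℱ.le n)).symm
      _ = ∫ ω, (M n * μ[D|ℱ n]) ω ∂μ := integral_congr_ae <|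
        condExp_mul_of_stronglyMeasurable_left (hM.stronglyAdapted n) hMD
          (hD.integrable one_le_two)
      _ = 0 := integral_eq_zero_of_ae (hD_cond.mono fun ω hω => by simp [hω])
  have hexpand : (fun ω => M (n + 1) ω ^ 2) =
      fun ω => M n ω ^ 2 + 2 * (M n ω * D ω) + D ω ^ 2 := by
    ext ω; simp only [D, Pi.sub_apply]; ring
  have hMn_sq : Integrable (fun ω => M n ω ^ 2) μ := (hM2 n).integrable_sq
  have hcross_int : Integrable (fun ω => 2 * (M n ω * D ω)) μ := hMD.const_mul 2
  rw [hexpand, integral_add (f := fun ω => M n ω ^ 2 + 2 * (M n ω * D ω)) (hMn_sq.add hcross_int)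
    hD.integrable_sq, integral_add hMn_sq hcross_int, integral_const_mul, hcross, mul_zero, add_zero]
  rfl

lemma Martingale.integral_sq_eq_add_sum [IsFiniteMeasure μ] {M : ℕ → Ω → ℝ}
    (hM : Martingale M ℱ μ) (hM2 : ∀ n, MemLp (M n) 2 μ) (n : ℕ) :
    ∫ ω, M n ω ^ 2 ∂μ =
      ∫ ω, M 0 ω ^ 2 ∂μ + ∑ k ∈ range n, ∫ ω, (M (k + 1) ω - M k ω) ^ 2 ∂μ := by
  induction n with
  | zero => simp
  | succ n ih => rw [hM.integral_sq_add_one hM2, ih, sum_range_succ, add_assoc]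

lemma memLp_martingalePart {p : ℝ≥0∞} (hp : 1 ≤ p) {f : ℕ → Ω → ℝ}
    (hf : ∀ n, MemLp (f n) p μ) (n : ℕ) : MemLp (martingalePart f ℱ μ n) p μ :=
  (hf n).sub (memLp_finsetSum' _ fun i _ => ((hf (i + 1)).sub (hf i)).condExp hp)

lemma martingalePart_add_one_sub (f : ℕ → Ω → ℝ) (n : ℕ) :
    martingalePart f ℱ μ (n + 1) - martingalePart f ℱ μ n =
      f (n + 1) - f n - μ[f (n + 1) - f n|ℱ n] := by
  simp only [martingalePart, predictablePart_add_one]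
  abel

lemma integral_sq_martingalePart_le [IsFiniteMeasure μ] {f : ℕ → Ω → ℝ}
    (hf : StronglyAdapted ℱ f) (hf2 : ∀ n, MemLp (f n) 2 μ) (n : ℕ) :
    ∫ ω, martingalePart f ℱ μ n ω ^ 2 ∂μ ≤
      ∫ ω, f 0 ω ^ 2 ∂μ + ∑ k ∈ range n, ∫ ω, (f (k + 1) ω - f k ω) ^ 2 ∂μ := by
  have hM := martingale_martingalePart hf fun n => (hf2 n).integrable one_le_two
  rw [hM.integral_sq_eq_add_sum (memLp_martingalePart one_le_two hf2), martingalePart_zero]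
  gcongr ∫ ω, f 0 ω ^ 2 ∂μ + ∑ k ∈ range n, ?_ with k
  simpa only [← Pi.sub_apply, martingalePart_add_one_sub] using
    integral_sq_sub_condExp_le (ℱ.le k) ((hf2 (k + 1)).sub (hf2 k))

lemma abs_le_sup'_abs_martingalePart_add (f : ℕ → Ω → ℝ) {k n : ℕ} (hk : k ≤ n) (ω : Ω) :
    |f k ω| ≤ (range (n + 1)).sup' nonempty_range_add_one
        (fun j => |martingalePart f ℱ μ j ω|) +
      ∑ i ∈ range n, |μ[f (i + 1) - f i|ℱ i] ω| := by
  have hdecomp : f k ω = martingalePart f ℱ μ k ω + ∑ i ∈ range k, μ[f (i + 1) - f i|ℱ i] ω := by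
    simp [martingalePart, predictablePart, Finset.sum_apply]
  rw [hdecomp]
  refine (abs_add_le _ _).trans (add_le_add ?_ ?_)
  · exact le_sup' (fun j => |martingalePart f ℱ μ j ω|) (mem_range_succ_iff.2 hk)
  · exact (abs_sum_le_sum_abs _ _).trans
      (sum_le_sum_of_subset_of_nonneg (range_subset_range.2 hk) fun _ _ _ => abs_nonneg _)

theorem integral_iSup_abs_le [IsFiniteMeasure μ] {Z : ℕ → Ω → ℝ} (hZ : StronglyAdapted ℱ Z)
    (hZ2 : ∀ n, MemLp (Z n) 2 μ) {a : ℝ} (ha : 0 < a) (n : ℕ) :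
    ∫ ω, ⨆ k : Fin (n + 1), |Z k ω| ∂μ ≤
      a * μ.real Set.univ +
        (∫ ω, Z 0 ω ^ 2 ∂μ + ∑ k ∈ range n, ∫ ω, (Z (k + 1) ω - Z k ω) ^ 2 ∂μ) / a +
        ∑ k ∈ range n, ∫ ω, |μ[Z (k + 1) - Z k|ℱ k] ω| ∂μ := by
  set M := martingalePart Z ℱ μ
  have hM := martingale_martingalePart hZ fun n => (hZ2 n).integrable one_le_two
  have hM2 : ∀ n, MemLp (M n) 2 μ := memLp_martingalePart one_le_two hZ2
  set G := fun ω => (range (n + 1)).sup' nonempty_range_add_one (fun k => |M k ω|)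
  have hG : Integrable G μ :=
    integrable_finset_sup' _ fun k _ => ((hM2 k).integrable one_le_two).abs
  have hA : Integrable (fun ω => ∑ k ∈ range n, |μ[Z (k + 1) - Z k|ℱ k] ω|) μ :=
    integrable_finsetSum _ fun k _ => integrable_condExp.abs
  have hpath : ∀ ω, ⨆ k : Fin (n + 1), |Z k ω| ≤
      G ω + ∑ k ∈ range n, |μ[Z (k + 1) - Z k|ℱ k] ω| := fun ω =>
    ciSup_le fun k => abs_le_sup'_abs_martingalePart_add Z (Fin.is_le k) ω
  calc ∫ ω, ⨆ k : Fin (n + 1), |Z k ω| ∂μ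
      ≤ ∫ ω, G ω + ∑ k ∈ range n, |μ[Z (k + 1) - Z k|ℱ k] ω| ∂μ :=
        integral_mono_of_nonneg (ae_of_all _ fun ω => Real.iSup_nonneg fun _ => abs_nonneg _)
          (hG.add hA) (ae_of_all _ hpath)
    _ = ∫ ω, G ω ∂μ + ∑ k ∈ range n, ∫ ω, |μ[Z (k + 1) - Z k|ℱ k] ω| ∂μ := by
        rw [integral_add hG hA, integral_finsetSum _ fun k _ => integrable_condExp.abs]
    _ ≤ _ := by
        gcongr
        exact (hM.integral_sup'_abs_le hM2 ha n).trans <| by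
          gcongr
          exact integral_sq_martingalePart_le hZ hZ2 n

theorem integral_iSup_abs_le_of_le [IsFiniteMeasure μ] {N : ℕ} {Y : ℕ → Ω → ℝ}
    (hY : ∀ m ≤ N, StronglyMeasurable[ℱ m] (Y m)) (hY2 : ∀ m ≤ N, MemLp (Y m) 2 μ) {a : ℝ}
    (ha : 0 < a) :
    ∫ ω, ⨆ k : Fin (N + 1), |Y k ω| ∂μ ≤
      a * μ.real Set.univ +
        (∫ ω, Y 0 ω ^ 2 ∂μ + ∑ k ∈ range N, ∫ ω, (Y (k + 1) ω - Y k ω) ^ 2 ∂μ) / a +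
        ∑ k ∈ range N, ∫ ω, |μ[fun ω => Y (k + 1) ω - Y k ω|ℱ k] ω| ∂μ := by
  set Z : ℕ → Ω → ℝ := fun m => Y (min m N)
  have hZ : StronglyAdapted ℱ Z := fun m =>
    (hY _ (min_le_right m N)).mono (ℱ.mono (min_le_left m N))
  have hZ_sub : ∀ k ∈ range N, Z (k + 1) - Z k = fun ω => Y (k + 1) ω - Y k ω := fun k hk => by
    have hk := mem_range.1 hk
    ext ω
    simp [Z, min_eq_left (Nat.succ_le_of_lt hk), min_eq_left hk.le]
  have hmax := integral_iSup_abs_le hZ (fun m => hY2 _ (min_le_right m N)) ha N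
  have hsup : ∀ ω, ⨆ k : Fin (N + 1), |Y k ω| = ⨆ k : Fin (N + 1), |Z k ω| := fun ω => by
    simp [Z, min_eq_left (Fin.is_le _)]
  have hsq : ∑ k ∈ range N, ∫ ω, (Z (k + 1) ω - Z k ω) ^ 2 ∂μ =
      ∑ k ∈ range N, ∫ ω, (Y (k + 1) ω - Y k ω) ^ 2 ∂μ :=
    sum_congr rfl fun k hk => by simp only [← Pi.sub_apply, hZ_sub k hk]
  have hcond : ∑ k ∈ range N, ∫ ω, |μ[Z (k + 1) - Z k|ℱ k] ω| ∂μ =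
      ∑ k ∈ range N, ∫ ω, |μ[fun ω => Y (k + 1) ω - Y k ω|ℱ k] ω| ∂μ :=
    sum_congr rfl fun k hk => by rw [hZ_sub k hk]
  simp only [hsup]
  rwa [hsq, hcond] at hmax

section Telescoping

variable {N : ℕ} {ξ : ℕ → Ω → ℝ}

lemma sum_integral_sub_eq (hξ : ∀ m ≤ N, Integrable (ξ m) μ) :
    ∑ k ∈ range N, ∫ ω, (ξ (k + 1) ω - ξ k ω) ∂μ = ∫ ω, ξ N ω ∂μ - ∫ ω, ξ 0 ω ∂μ := by
  rw [← sum_range_sub (fun k => ∫ ω, ξ k ω ∂μ)]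
  exact sum_congr rfl fun k hk => integral_sub (hξ _ (mem_range.1 hk)) (hξ _ (mem_range.1 hk).le)

lemma sum_integral_sq_sub_le {Y : ℕ → Ω → ℝ} {c : ℝ} (hY2 : ∀ m ≤ N, MemLp (Y m) 2 μ)
    (hξ : ∀ m ≤ N, Integrable (ξ m) μ)
    (hdom : ∀ m < N, ∀ᵐ ω ∂μ,
      |Y (m + 1) ω - Y m ω| ≤ ξ (m + 1) ω - ξ m ω ∧ ξ (m + 1) ω - ξ m ω ≤ c) :
    ∑ k ∈ range N, ∫ ω, (Y (k + 1) ω - Y k ω) ^ 2 ∂μ ≤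
      c * (∫ ω, ξ N ω ∂μ - ∫ ω, ξ 0 ω ∂μ) := by
  rw [← sum_integral_sub_eq hξ, mul_sum]
  refine sum_le_sum fun k hk => ?_
  have hk := mem_range.1 hk
  rw [← integral_const_mul]
  refine integral_mono_ae ((hY2 _ hk).sub (hY2 _ hk.le)).integrable_sq
    (((hξ _ hk).sub (hξ _ hk.le)).const_mul c) ?_
  filter_upwards [hdom k hk] with ω ⟨hY, hξc⟩
  nlinarith [abs_nonneg (Y (k + 1) ω - Y k ω), sq_abs (Y (k + 1) ω - Y k ω)]

lemma sum_integral_abs_condExp_sub_le [IsFiniteMeasure μ] {Y : ℕ → Ω → ℝ} {δ : ℝ}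
    (hξ : ∀ m ≤ N, Integrable (ξ m) μ)
    (hcond : ∀ m < N, ∀ᵐ ω ∂μ,
      |μ[fun ω => Y (m + 1) ω - Y m ω|ℱ m] ω| ≤ δ * μ[fun ω => ξ (m + 1) ω - ξ m ω|ℱ m] ω) :
    ∑ k ∈ range N, ∫ ω, |μ[fun ω => Y (k + 1) ω - Y k ω|ℱ k] ω| ∂μ ≤
      δ * (∫ ω, ξ N ω ∂μ - ∫ ω, ξ 0 ω ∂μ) := by
  rw [← sum_integral_sub_eq hξ, mul_sum]
  refine sum_le_sum fun k hk => ?_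
  have hk := mem_range.1 hk
  rw [← integral_condExp (ℱ.le k) (f := fun ω => ξ (k + 1) ω - ξ k ω), ← integral_const_mul]
  exact integral_mono_ae integrable_condExp.abs (integrable_condExp.const_mul δ) (hcond k hk)

end Telescoping

end MeasureTheory

theorem coupled_process_estimate_general
    {Ω : Type*} {mΩ : MeasurableSpace Ω} (P : Measure Ω) [IsProbabilityMeasure P]
    (ℱ : Filtration ℕ mΩ) (N : ℕ) (ξ Y : ℕ → Ω → ℝ)
    (hξadapted : ∀ m ≤ N, StronglyMeasurable[ℱ m] (ξ m))
    (hYadapted : ∀ m ≤ N, StronglyMeasurable[ℱ m] (Y m))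
    (hξ0 : ξ 0 = 0) (hY0 : Y 0 = 0)
    (hξN : ∀ᵐ ω ∂P, ξ N ω ≤ 1)
    (δ : ℝ) (hδ0 : 0 < δ) (K : ℕ) (hK : 1 ≤ K)
    (hdom : ∀ m < N, ∀ᵐ ω ∂P,
      |Y (m + 1) ω - Y m ω| ≤ ξ (m + 1) ω - ξ m ω ∧
      ξ (m + 1) ω - ξ m ω ≤ 1 / (K : ℝ) ^ 2)
    (hcond : ∀ m < N, ∀ᵐ ω ∂P,
      |(P[fun ω => Y (m + 1) ω - Y m ω|ℱ m]) ω| ≤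
        δ * (P[fun ω => ξ (m + 1) ω - ξ m ω|ℱ m]) ω) :
    ∫ ω, (⨆ m : Fin (N + 1), |Y m ω|) ∂P ≤ 2 / (K : ℝ) + δ := by
  have hbound : ∀ᵐ ω ∂P, ∀ m ≤ N, |Y m ω| ≤ ξ m ω ∧ ξ m ω ≤ 1 := by
    filter_upwards [ae_all_iff.2 fun m => eventually_imp_distrib_left.2 (hdom m), hξN]
      with ω hω hωN m hm
    exact abs_le_and_le_one_of_abs_sub_succ_le (x := (ξ · ω)) (y := (Y · ω))
      (fun k hk => (hω k hk).1) (congrFun hξ0 ω) (congrFun hY0 ω) hωN hm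
  have hξint : ∀ m ≤ N, Integrable (ξ m) P := fun m hm =>
    .of_bound ((hξadapted m hm).mono (ℱ.le m)).aestronglyMeasurable 1 <| by
      filter_upwards [hbound] with ω hω
      rw [Real.norm_eq_abs, abs_of_nonneg ((abs_nonneg _).trans (hω m hm).1)]
      exact (hω m hm).2
  have hY2 : ∀ m ≤ N, MemLp (Y m) 2 P := fun m hm =>
    .of_bound ((hYadapted m hm).mono (ℱ.le m)).aestronglyMeasurable 1 <| by
      filter_upwards [hbound] with ω hω
      exact (hω m hm).1.trans (hω m hm).2
  have hξ_total : ∫ ω, ξ N ω ∂P - ∫ ω, ξ 0 ω ∂P ≤ 1 := by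
    simpa [hξ0] using integral_mono_ae (hξint N le_rfl) (integrable_const 1) hξN
  have hK0 : (0 : ℝ) < K := by exact_mod_cast hK
  have hmax := integral_iSup_abs_le_of_le hYadapted hY2 (inv_pos.2 hK0)
  have hsq := (sum_integral_sq_sub_le hY2 hξint hdom).trans
    (mul_le_of_le_one_right (by positivity) hξ_total)
  have hdrift := (sum_integral_abs_condExp_sub_le hξint hcond).trans
    (mul_le_of_le_one_right hδ0.le hξ_total)
  have hY0_sq : ∫ ω, Y 0 ω ^ 2 ∂P = 0 := by simp [hY0]
  rw [probReal_univ, hY0_sq, zero_add] at hmax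
  calc _ ≤ _ := hmax
    _ ≤ (K : ℝ)⁻¹ * 1 + 1 / (K : ℝ) ^ 2 / (K : ℝ)⁻¹ + δ := by gcongr
    _ = 2 / (K : ℝ) + δ := by field_simp; ring

/-- Lemma 5.14 (Yxilemma): a coupled-process estimate. If the increments of Y are dominated
pathwise by the increments of the nondecreasing process ξ (which are at most 1/K², with
ξ_N ≤ 1), and the conditional expectations of the increments of Y are at most δ times those
of ξ, then E[max_m |Y_m|] ≤ 2/K + δ. -/
theorem coupled_process_estimate
    {Ω : Type*} {mΩ : MeasurableSpace Ω} (P : Measure Ω) [IsProbabilityMeasure P]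
    (ℱ : Filtration ℕ mΩ) (N : ℕ) (ξ Y : ℕ → Ω → ℝ)
    (hξadapted : ∀ m ≤ N, StronglyMeasurable[ℱ m] (ξ m))
    (hYadapted : ∀ m ≤ N, StronglyMeasurable[ℱ m] (Y m))
    (hξ0 : ξ 0 = 0) (hY0 : Y 0 = 0)
    (hξmono : ∀ᵐ ω ∂P, ∀ m < N, ξ m ω ≤ ξ (m + 1) ω)
    (hξN : ∀ᵐ ω ∂P, ξ N ω ≤ 1)
    (δ : ℝ) (hδ0 : 0 < δ) (hδ1 : δ < 1) (K : ℕ) (hK : 1 ≤ K)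
    (hdom : ∀ m < N, ∀ᵐ ω ∂P,
      |Y (m + 1) ω - Y m ω| ≤ ξ (m + 1) ω - ξ m ω ∧
      ξ (m + 1) ω - ξ m ω ≤ 1 / (K : ℝ) ^ 2)
    (hcond : ∀ m < N, ∀ᵐ ω ∂P,
      |(P[fun ω => Y (m + 1) ω - Y m ω|ℱ m]) ω| ≤
        δ * (P[fun ω => ξ (m + 1) ω - ξ m ω|ℱ m]) ω) :
    ∫ ω, (⨆ m : Fin (N + 1), |Y m ω|) ∂P ≤ 2 / (K : ℝ) + δ :=
  coupled_process_estimate_general P ℱ N ξ Y hξadapted hYadapted hξ0 hY0 hξN δ hδ0 K hK hdom hcond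
end

section
/- Let π be a frozen percolation type flow with initial kernel a kernel κ and critical time t_c. Then for every t ≥ t_c one has t·‖π(t)‖₁ ≤ 1. -/
open Matrix

noncomputable def perronRoot {k : ℕ} (A : Matrix (Fin k) (Fin k) ℝ) : ℝ :=
  sSup ((fun z : ℂ => ‖z‖) '' spectrum ℂ (A.map Complex.ofReal))

def circ {k : ℕ} (A : Matrix (Fin k) (Fin k) ℝ) (v : Fin k → ℝ) : Matrix (Fin k) (Fin k) ℝ :=
  Matrix.of fun i j => A i j * v j

noncomputable def l1norm {k : ℕ} (v : Fin k → ℝ) : ℝ := ∑ i, |v i|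

noncomputable def kernelAt {k : ℕ} (κ : Matrix (Fin k) (Fin k) ℝ) (t : ℝ) :
    Matrix (Fin k) (Fin k) ℝ :=
  κ + t • Matrix.of (fun _ _ => (1 : ℝ))

def IsKernel {k : ℕ} (κ : Matrix (Fin k) (Fin k) ℝ) : Prop :=
  κ.IsSymm ∧ ∀ i j, 0 ≤ κ i j

structure IsTypeFlow {k : ℕ} (κ : Matrix (Fin k) (Fin k) ℝ) (π : ℝ → Fin k → ℝ)
    (tc : ℝ) (φ : ℝ → ℝ) : Prop where
  nonneg : ∀ t ≥ (0 : ℝ), ∀ i, 0 ≤ π t i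
  ne_zero : ∀ t ≥ (0 : ℝ), π t ≠ 0
  cont : ContinuousOn π (Set.Ici 0)
  tc_nonneg : 0 ≤ tc
  phi_pos : ∀ t > tc, 0 < φ t
  phi_cont : ContinuousOn φ (Set.Ioi tc)
  init : ∀ t, 0 ≤ t → t ≤ tc → π t = π 0
  crit : ∀ t ≥ tc, perronRoot (circ (kernelAt κ t) (π t)) = 1
  flowDE : ∀ t > tc, ∃ μ : Fin k → ℝ,
      (∀ i, 0 < μ i) ∧ l1norm μ = 1 ∧
      Matrix.vecMul μ (circ (kernelAt κ t) (π t)) = μ ∧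
      HasDerivAt π (-(φ t) • μ) t

/-
For t > t_c the left Perron vector μ(t) of κ(t)∘π(t) is a probability vector fixed by that matrix,
so μ_j = (Σ_i μ_i (κ_{ij} + t)) π_j(t) ≥ t π_j(t); summing over j gives t ‖π(t)‖₁ ≤ Σ_j μ_j = 1.
The case t = t_c follows by continuity of π.
-/

lemma vecMul_circ_apply {k : ℕ} (μ : Fin k → ℝ) (A : Matrix (Fin k) (Fin k) ℝ)
    (v : Fin k → ℝ) (j : Fin k) :
    vecMul μ (circ A v) j = (∑ i, μ i * A i j) * v j := by
  simp only [vecMul, dotProduct, circ, of_apply, Finset.sum_mul, mul_assoc]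

lemma kernelAt_apply {k : ℕ} (κ : Matrix (Fin k) (Fin k) ℝ) (t : ℝ) (i j : Fin k) :
    kernelAt κ t i j = κ i j + t := by
  simp [kernelAt]

lemma l1norm_of_nonneg {k : ℕ} {v : Fin k → ℝ} (hv : ∀ i, 0 ≤ v i) : l1norm v = ∑ i, v i :=
  Finset.sum_congr rfl fun i _ => abs_of_nonneg (hv i)

lemma continuousOn_l1norm {k : ℕ} {π : ℝ → Fin k → ℝ} {s : Set ℝ} (hπ : ContinuousOn π s) :
    ContinuousOn (fun t => l1norm (π t)) s :=
  continuousOn_finsetSum _ fun i _ => ((continuous_apply i).comp_continuousOn hπ).abs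

lemma mul_sum_mul_le_of_vecMul_circ_eq {k : ℕ} {A : Matrix (Fin k) (Fin k) ℝ} {t : ℝ}
    (hA : ∀ i j, t ≤ A i j) {μ v : Fin k → ℝ} (hμ : ∀ i, 0 ≤ μ i) (hv : ∀ i, 0 ≤ v i)
    (hfix : vecMul μ (circ A v) = μ) (j : Fin k) :
    t * (∑ i, μ i) * v j ≤ μ j := by
  calc t * (∑ i, μ i) * v j = (∑ i, μ i * t) * v j := by rw [← Finset.sum_mul, mul_comm t]
    _ ≤ (∑ i, μ i * A i j) * v j :=
        mul_le_mul_of_nonneg_right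
          (Finset.sum_le_sum fun i _ => mul_le_mul_of_nonneg_left (hA i j) (hμ i)) (hv j)
    _ = μ j := by rw [← vecMul_circ_apply, hfix]

lemma mul_l1norm_le_one_of_vecMul_circ_eq {k : ℕ} {A : Matrix (Fin k) (Fin k) ℝ} {t : ℝ}
    (hA : ∀ i j, t ≤ A i j) {μ v : Fin k → ℝ} (hμ : ∀ i, 0 ≤ μ i) (hμ1 : l1norm μ = 1)
    (hv : ∀ i, 0 ≤ v i) (hfix : vecMul μ (circ A v) = μ) :
    t * l1norm v ≤ 1 := by
  have hsum : ∑ i, μ i = 1 := by rw [← l1norm_of_nonneg hμ, hμ1]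
  calc t * l1norm v = ∑ j, t * (∑ i, μ i) * v j := by
        rw [l1norm_of_nonneg hv, hsum, mul_one, Finset.mul_sum]
    _ ≤ ∑ j, μ j := Finset.sum_le_sum fun j _ => mul_sum_mul_le_of_vecMul_circ_eq hA hμ hv hfix j
    _ = 1 := hsum

namespace IsTypeFlow

variable {k : ℕ} {κ : Matrix (Fin k) (Fin k) ℝ} {π : ℝ → Fin k → ℝ} {tc : ℝ} {φ : ℝ → ℝ}

lemma mul_l1norm_le_one_of_lt (hκ : ∀ i j, 0 ≤ κ i j) (hπ : IsTypeFlow κ π tc φ) {t : ℝ}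
    (ht : tc < t) : t * l1norm (π t) ≤ 1 := by
  obtain ⟨μ, hμpos, hμ1, hfix, -⟩ := hπ.flowDE t ht
  have hA : ∀ i j, t ≤ kernelAt κ t i j := fun i j => by
    rw [kernelAt_apply]
    exact le_add_of_nonneg_left (hκ i j)
  exact mul_l1norm_le_one_of_vecMul_circ_eq hA (fun i => (hμpos i).le) hμ1
    (hπ.nonneg t (hπ.tc_nonneg.trans ht.le)) hfix

lemma mul_l1norm_le_one (hκ : ∀ i j, 0 ≤ κ i j) (hπ : IsTypeFlow κ π tc φ) {t : ℝ}
    (ht : tc ≤ t) : t * l1norm (π t) ≤ 1 := by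
  rcases ht.lt_or_eq with ht | rfl
  · exact hπ.mul_l1norm_le_one_of_lt hκ ht
  have hcont : ContinuousWithinAt (fun s => s * l1norm (π s)) (Set.Ioi tc) tc :=
    ((continuousOn_id.mul (continuousOn_l1norm hπ.cont)) tc hπ.tc_nonneg).mono
      fun s hs => hπ.tc_nonneg.trans (le_of_lt hs)
  refine le_of_tendsto hcont ?_
  filter_upwards [self_mem_nhdsWithin] with s hs
  exact hπ.mul_l1norm_le_one_of_lt hκ hs

end IsTypeFlow

theorem type_flow_total_mass_bound_general
    {k : ℕ} (κ : Matrix (Fin k) (Fin k) ℝ) (hκ : IsKernel κ)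
    (π : ℝ → Fin k → ℝ) (tc : ℝ) (φ : ℝ → ℝ) (hπ : IsTypeFlow κ π tc φ) :
    ∀ t ≥ tc, t * l1norm (π t) ≤ 1 :=
  fun _ ht => hπ.mul_l1norm_le_one hκ.2 ht

/-- Equation (6.2) (upbdPhi): after the critical time, Φ(t) = ‖π(t)‖₁ ≤ 1/t. -/
theorem type_flow_total_mass_bound
    {k : ℕ} (hk : 0 < k) (κ : Matrix (Fin k) (Fin k) ℝ) (hκ : IsKernel κ)
    (π : ℝ → Fin k → ℝ) (tc : ℝ) (φ : ℝ → ℝ) (hπ : IsTypeFlow κ π tc φ) :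
    ∀ t ≥ tc, t * l1norm (π t) ≤ 1 :=
  type_flow_total_mass_bound_general κ hκ π tc φ hπ
end

section
/- For all real numbers 0 < η < T < ∞ there exists a constant c < 1 such that: for every symmetric k×k real matrix A with all entries in [η,T], every eigenvalue λ of A other than the largest eigenvalue λ_max(A) satisfies |λ| ≤ c·λ_max(A). -/
/-!
Let `μ` be the top eigenvalue of a symmetric `A` with entries in `[η, T]`. If `u` is a
`μ`-eigenvector then `|u|` attains the Rayleigh maximum, so it is again a `μ`-eigenvector; scaled
so that `∑ w = μ`, it satisfies `μ wᵢ = (A w)ᵢ ∈ [η μ, T μ]`, i.e. `wᵢ ∈ [η, T]`, and `μ ≤ k T`.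
An eigenvector `v` for another eigenvalue `λ` is orthogonal to `w`, so the masses `P`, `N` of its
positive and negative parts are comparable: `η P ≤ T N` and `η N ≤ T P`. Since `Aᵢⱼ - η ≥ 0`,
`|λ| ‖v‖² + η ((∑ |vᵢ|)² - (∑ vᵢ)²) ≤ ⟪|v|, A |v|⟫ ≤ μ ‖v‖²`, and the
bracket is `4 P N ≥ (η / T) ‖v‖²`. Hence `|λ| + η² / T ≤ μ`.
-/

open Matrix

lemma mul_sq_sum_abs_le_of_dotProduct_eq_zero {ι : Type*} [Fintype ι] {w v : ι → ℝ} {m M : ℝ}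
    (hm : 0 ≤ m) (hw : ∀ i, w i ∈ Set.Icc m M) (hwv : w ⬝ᵥ v = 0) :
    m * (∑ i, |v i|) ^ 2 ≤ M * ((∑ i, |v i|) ^ 2 - (∑ i, v i) ^ 2) := by
  have posPart_le_negPart : ∀ u : ι → ℝ, w ⬝ᵥ u = 0 → m * ∑ i, (u i)⁺ ≤ M * ∑ i, (u i)⁻ := by
    intro u hu
    have balance : ∑ i, w i * (u i)⁺ = ∑ i, w i * (u i)⁻ := by
      rw [← sub_eq_zero, ← Finset.sum_sub_distrib]
      simpa only [dotProduct, ← mul_sub, posPart_sub_negPart] using hu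
    calc m * ∑ i, (u i)⁺ ≤ ∑ i, w i * (u i)⁺ := by
          rw [Finset.mul_sum]
          gcongr with i
          exact (hw i).1
      _ = ∑ i, w i * (u i)⁻ := balance
      _ ≤ M * ∑ i, (u i)⁻ := by
          rw [Finset.mul_sum]
          gcongr with i
          exact (hw i).2
  set P := ∑ i, (v i)⁺
  set N := ∑ i, (v i)⁻
  have hP : m * P ≤ M * N := posPart_le_negPart v hwv
  have hN : m * N ≤ M * P := by
    simpa [posPart_neg, negPart_neg] using
      posPart_le_negPart (-v) (by rw [dotProduct_neg, hwv, neg_zero])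
  have hsum_abs : ∑ i, |v i| = P + N := by
    simp only [P, N, ← Finset.sum_add_distrib, posPart_add_negPart]
  have hsum : ∑ i, v i = P - N := by
    simp only [P, N, ← Finset.sum_sub_distrib, posPart_sub_negPart]
  have hP0 : 0 ≤ P := Finset.sum_nonneg fun i _ => posPart_nonneg _
  have hN0 : 0 ≤ N := Finset.sum_nonneg fun i _ => negPart_nonneg _
  rw [hsum_abs, hsum]
  nlinarith [mul_le_mul_of_nonneg_right hP hP0, mul_le_mul_of_nonneg_right hN hN0,
    mul_nonneg hm (sq_nonneg (P - N))]

namespace Matrix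

variable {n : Type*} [Fintype n]

lemma exists_mulVec_eq_smul_of_mem_spectrum [DecidableEq n] {K : Type*} [Field K]
    {A : Matrix n n K} {r : K} (hr : r ∈ spectrum K A) : ∃ v, v ≠ 0 ∧ A *ᵥ v = r • v := by
  rw [← spectrum_toLin', ← Module.End.hasEigenvalue_iff_mem_spectrum] at hr
  obtain ⟨v, hv, hv0⟩ := hr.exists_hasEigenvector
  exact ⟨v, hv0, by simpa using Module.End.mem_eigenspace_iff.mp hv⟩

section Rayleigh

variable [DecidableEq n] {A : Matrix n n ℝ} {r : ℝ}

open scoped MatrixOrder in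
lemma IsHermitian.posSemidef_algebraMap_sub (hA : A.IsHermitian)
    (hr : ∀ x ∈ spectrum ℝ A, x ≤ r) : (algebraMap ℝ _ r - A).PosSemidef :=
  (le_algebraMap_iff_spectrum_le hA.isSelfAdjoint).mpr hr

lemma algebraMap_sub_mulVec (A : Matrix n n ℝ) (r : ℝ) (v : n → ℝ) :
    (algebraMap ℝ _ r - A) *ᵥ v = r • v - A *ᵥ v := by
  rw [sub_mulVec, Algebra.algebraMap_eq_smul_one, smul_mulVec, one_mulVec]

lemma IsHermitian.dotProduct_mulVec_le (hA : A.IsHermitian)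
    (hr : ∀ x ∈ spectrum ℝ A, x ≤ r) (v : n → ℝ) : v ⬝ᵥ A *ᵥ v ≤ r * (v ⬝ᵥ v) := by
  have := (hA.posSemidef_algebraMap_sub hr).dotProduct_mulVec_nonneg v
  rw [star_trivial, algebraMap_sub_mulVec, dotProduct_sub, dotProduct_smul, smul_eq_mul] at this
  linarith

lemma IsHermitian.mulVec_eq_smul_of_dotProduct_mulVec_eq (hA : A.IsHermitian)
    (hr : ∀ x ∈ spectrum ℝ A, x ≤ r) {v : n → ℝ} (hv : v ⬝ᵥ A *ᵥ v = r * (v ⬝ᵥ v)) :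
    A *ᵥ v = r • v := by
  have h := (hA.posSemidef_algebraMap_sub hr).dotProduct_mulVec_zero_iff v
  rw [star_trivial, algebraMap_sub_mulVec, dotProduct_sub, dotProduct_smul, smul_eq_mul, hv,
    sub_self] at h
  exact (sub_eq_zero.mp (h.mp rfl)).symm

end Rayleigh

lemma mul_dotProduct_mulVec_add_le {A : Matrix n n ℝ} {η s : ℝ} (hA : ∀ i j, η ≤ A i j)
    (hs : |s| ≤ 1) (v : n → ℝ) :
    s * (v ⬝ᵥ A *ᵥ v) + η * ((∑ i, |v i|) ^ 2 - s * (∑ i, v i) ^ 2) ≤ |v| ⬝ᵥ A *ᵥ |v| := by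
  have term : ∀ i j, s * (v i * (A i j * v j)) + η * (|v i| * |v j| - s * (v i * v j))
      ≤ |v i| * (A i j * |v j|) := by
    intro i j
    have hsx : s * (v i * v j) ≤ |v i| * |v j| := by
      rw [← abs_mul]
      calc s * (v i * v j) ≤ |s * (v i * v j)| := le_abs_self _
        _ = |s| * |v i * v j| := abs_mul _ _
        _ ≤ |v i * v j| := mul_le_of_le_one_left (abs_nonneg _) hs
    nlinarith [mul_le_mul_of_nonneg_right (hA i j) (sub_nonneg.mpr hsx)]
  calc s * (v ⬝ᵥ A *ᵥ v) + η * ((∑ i, |v i|) ^ 2 - s * (∑ i, v i) ^ 2)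
      = ∑ i, ∑ j, (s * (v i * (A i j * v j)) + η * (|v i| * |v j| - s * (v i * v j))) := by
        rw [sq, sq, Finset.sum_mul_sum, Finset.sum_mul_sum]
        simp only [dotProduct, mulVec, mul_sub, Finset.mul_sum, Finset.sum_add_distrib,
          Finset.sum_sub_distrib]
    _ ≤ ∑ i, ∑ j, |v i| * (A i j * |v j|) :=
        Finset.sum_le_sum fun i _ => Finset.sum_le_sum fun j _ => term i j
    _ = |v| ⬝ᵥ A *ᵥ |v| := by
        simp only [dotProduct, mulVec, Pi.abs_apply, Finset.mul_sum]

lemma abs_dotProduct_mulVec_add_le {A : Matrix n n ℝ} {η : ℝ} (hη : 0 ≤ η)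
    (hA : ∀ i j, η ≤ A i j) (v : n → ℝ) :
    |v ⬝ᵥ A *ᵥ v| + η * ((∑ i, |v i|) ^ 2 - (∑ i, v i) ^ 2) ≤ |v| ⬝ᵥ A *ᵥ |v| := by
  rcases abs_cases (v ⬝ᵥ A *ᵥ v) with ⟨h, -⟩ | ⟨h, -⟩
  · simpa [h] using mul_dotProduct_mulVec_add_le hA (s := 1) (by simp) v
  · have := mul_dotProduct_mulVec_add_le hA (s := -1) (by simp) v
    nlinarith [mul_nonneg hη (sq_nonneg (∑ i, v i))]

lemma IsSymm.dotProduct_eq_zero_of_mulVec_eq_smul {A : Matrix n n ℝ} (hA : A.IsSymm)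
    {v w : n → ℝ} {a b : ℝ} (hab : a ≠ b) (hv : A *ᵥ v = a • v) (hw : A *ᵥ w = b • w) :
    v ⬝ᵥ w = 0 := by
  have h : a * (v ⬝ᵥ w) = b * (v ⬝ᵥ w) := by
    rw [← smul_eq_mul, ← smul_dotProduct, ← hv, ← smul_eq_mul, ← dotProduct_smul, ← hw,
      dotProduct_mulVec, ← mulVec_transpose, hA.eq]
  exact (mul_eq_mul_right_iff.mp h).resolve_left hab

lemma mulVec_apply_mem_Icc {A : Matrix n n ℝ} {η T : ℝ} (hA : ∀ i j, A i j ∈ Set.Icc η T)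
    {w : n → ℝ} (hw : 0 ≤ w) (i : n) :
    (A *ᵥ w) i ∈ Set.Icc (η * ∑ j, w j) (T * ∑ j, w j) := by
  simp only [mulVec, dotProduct, Finset.mul_sum]
  exact ⟨Finset.sum_le_sum fun j _ => mul_le_mul_of_nonneg_right (hA i j).1 (hw j),
    Finset.sum_le_sum fun j _ => mul_le_mul_of_nonneg_right (hA i j).2 (hw j)⟩

variable [DecidableEq n]

lemma IsHermitian.exists_nonneg_eigenvector {A : Matrix n n ℝ} (hA : A.IsHermitian)
    (hA0 : ∀ i j, 0 ≤ A i j) {μ : ℝ} (hμ : IsGreatest (spectrum ℝ A) μ) :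
    ∃ w, w ≠ 0 ∧ 0 ≤ w ∧ A *ᵥ w = μ • w := by
  obtain ⟨u, hu0, hu⟩ := exists_mulVec_eq_smul_of_mem_spectrum hμ.1
  have habs : |u| ⬝ᵥ |u| = u ⬝ᵥ u := by
    simp only [dotProduct, Pi.abs_apply, abs_mul_abs_self]
  have hle : μ * (|u| ⬝ᵥ |u|) ≤ |u| ⬝ᵥ A *ᵥ |u| := by
    calc μ * (|u| ⬝ᵥ |u|) = u ⬝ᵥ A *ᵥ u := by
          rw [habs, hu, dotProduct_smul, smul_eq_mul]
      _ ≤ |u ⬝ᵥ A *ᵥ u| := le_abs_self _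
      _ ≤ |u| ⬝ᵥ A *ᵥ |u| := by
          simpa using abs_dotProduct_mulVec_add_le le_rfl hA0 u
  refine ⟨|u|, by simpa using hu0, abs_nonneg u, ?_⟩
  exact hA.mulVec_eq_smul_of_dotProduct_mulVec_eq hμ.2
    (le_antisymm (hA.dotProduct_mulVec_le hμ.2 _) hle)

lemma IsHermitian.exists_eigenvector_mem_Icc {A : Matrix n n ℝ} (hA : A.IsHermitian) {η T : ℝ}
    (hη : 0 < η) (hAI : ∀ i j, A i j ∈ Set.Icc η T) {μ : ℝ} (hμ : IsGreatest (spectrum ℝ A) μ) :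
    ∃ w, A *ᵥ w = μ • w ∧ ∑ i, w i = μ ∧ ∀ i, w i ∈ Set.Icc η T := by
  obtain ⟨w, hw0, hw, hAw⟩ :=
    hA.exists_nonneg_eigenvector (fun i j => hη.le.trans (hAI i j).1) hμ
  set W := ∑ i, w i
  have hW : 0 < W := by
    obtain ⟨i, hi⟩ := Function.ne_iff.mp hw0
    exact Finset.sum_pos' (fun j _ => hw j) ⟨i, Finset.mem_univ _, (hw i).lt_of_ne' hi⟩
  refine ⟨(μ / W) • w, by rw [mulVec_smul, hAw, smul_comm], ?_, fun i => ?_⟩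
  · simp only [Pi.smul_apply, smul_eq_mul, ← Finset.mul_sum]
    exact div_mul_cancel₀ μ hW.ne'
  · have hi := mulVec_apply_mem_Icc hAI hw i
    rw [hAw, Pi.smul_apply, smul_eq_mul] at hi
    rw [Pi.smul_apply, smul_eq_mul, div_mul_eq_mul_div, Set.mem_Icc, le_div_iff₀ hW,
      div_le_iff₀ hW]
    exact hi

lemma IsSymm.abs_add_sq_div_le_of_mem_spectrum {A : Matrix n n ℝ} (hA : A.IsSymm) {η T μ : ℝ}
    (hη : 0 < η) (hT : 0 < T) (hAI : ∀ i j, A i j ∈ Set.Icc η T)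
    (hμ : IsGreatest (spectrum ℝ A) μ) {w : n → ℝ} (hAw : A *ᵥ w = μ • w)
    (hw : ∀ i, w i ∈ Set.Icc η T) {lam : ℝ} (hlam : lam ∈ spectrum ℝ A) (hne : lam ≠ μ) :
    |lam| + η ^ 2 / T ≤ μ := by
  obtain ⟨v, hv0, hv⟩ := exists_mulVec_eq_smul_of_mem_spectrum hlam
  set S := v ⬝ᵥ v
  have hS : 0 < S := by
    simpa [S] using dotProduct_star_self_pos_iff.mpr hv0
  set D := (∑ i, |v i|) ^ 2 - (∑ i, v i) ^ 2
  have hquad : |lam| * S + η * D ≤ μ * S := by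
    have h := abs_dotProduct_mulVec_add_le hη.le (fun i j => (hAI i j).1) v
    rw [hv, dotProduct_smul, smul_eq_mul, abs_mul, abs_of_pos hS] at h
    have hR := (isHermitian_iff_isSymm.mpr hA).dotProduct_mulVec_le hμ.2 |v|
    have habs : |v| ⬝ᵥ |v| = S := by simp only [S, dotProduct, Pi.abs_apply, abs_mul_abs_self]
    rw [habs] at hR
    linarith
  have hD : η * S ≤ T * D :=
    calc η * S ≤ η * (∑ i, |v i|) ^ 2 := by
          gcongr
          simpa [S, dotProduct, sq] using Finset.sum_sq_le_sq_sum_of_nonneg (s := Finset.univ)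
            (fun i _ => abs_nonneg (v i))
      _ ≤ T * D := mul_sq_sum_abs_le_of_dotProduct_eq_zero hη.le hw
          (hA.dotProduct_eq_zero_of_mulVec_eq_smul hne.symm hAw hv)
  have hgap : η ^ 2 / T * S ≤ η * D := by
    rw [div_mul_eq_mul_div, div_le_iff₀ hT]
    nlinarith
  have : (|lam| + η ^ 2 / T) * S ≤ μ * S := by linarith
  exact le_of_mul_le_mul_right this hS

end Matrix

theorem uniform_spectral_gap_general
    {k : ℕ} (η T : ℝ) (hη : 0 < η) (hηT : η < T) :
    ∃ c : ℝ, c < 1 ∧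
      ∀ A : Matrix (Fin k) (Fin k) ℝ, A.IsSymm → (∀ i j, A i j ∈ Set.Icc η T) →
        ∀ lam ∈ spectrum ℝ A, lam ≠ sSup (spectrum ℝ A) →
          |lam| ≤ c * sSup (spectrum ℝ A) := by
  have hT : 0 < T := hη.trans hηT
  -- `k + 1` rather than `k`, so that `c < 1` also when `k = 0`.
  refine ⟨1 - η ^ 2 / ((k + 1) * T ^ 2), sub_lt_self 1 (by positivity), ?_⟩
  intro A hA hAI lam hlam hne
  set μ := sSup (spectrum ℝ A)
  have hμ : IsGreatest (spectrum ℝ A) μ :=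
    A.finite_real_spectrum.isClosed.isGreatest_csSup ⟨lam, hlam⟩ A.finite_real_spectrum.bddAbove
  obtain ⟨w, hAw, hsum, hw⟩ := (isHermitian_iff_isSymm.mpr hA).exists_eigenvector_mem_Icc hη hAI hμ
  have hgap := hA.abs_add_sq_div_le_of_mem_spectrum hη hT hAI hμ hAw hw hlam hne
  have hμk : μ ≤ (k + 1) * T := by
    calc μ = ∑ i, w i := hsum.symm
      _ ≤ k * T := by simpa using Finset.sum_le_card_nsmul Finset.univ w T fun i _ => (hw i).2
      _ ≤ (k + 1) * T := by linarith
  have : η ^ 2 / ((k + 1) * T ^ 2) * μ ≤ η ^ 2 / T := by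
    rw [div_mul_eq_mul_div, div_le_div_iff₀ (by positivity) hT]
    nlinarith [mul_le_mul_of_nonneg_left hμk (by positivity : (0 : ℝ) ≤ η ^ 2 * T)]
  linarith

/-- Equation (7.2) (supLambda2): a uniform spectral gap for symmetric matrices with all
entries in [η,T]: every eigenvalue other than the largest is at most c·λ_max in modulus,
for some constant c < 1 depending only on η, T (and k). -/
theorem uniform_spectral_gap
    {k : ℕ} (hk : 0 < k) (η T : ℝ) (hη : 0 < η) (hηT : η < T) :
    ∃ c : ℝ, c < 1 ∧
      ∀ A : Matrix (Fin k) (Fin k) ℝ, A.IsSymm → (∀ i j, A i j ∈ Set.Icc η T) →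
        ∀ lam ∈ spectrum ℝ A, lam ≠ sSup (spectrum ℝ A) →
          |lam| ≤ c * sSup (spectrum ℝ A) :=
  uniform_spectral_gap_general η T hη hηT
end
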